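/- arXiv:1809.06713 — 6 statements merged into one kernel-verified Lean document; each statement's English description precedes it below -/
import Mathlib

section
/- Let B be an n×n real matrix, and let Q be the (n+1)×(n+1) real block matrix Q = fromBlocks B (−B·𝟙) 0 0, i.e. Q has B as its upper-left n×n block, the column vector −B𝟙 as its upper-right block, and zeros in its last row. Then for every t ∈ ℝ, exp(t·Q) = fromBlocks (exp(t·B)) (𝟙 − exp(t·B)·𝟙) 0 1, i.e. the matrix exponential of tQ has exp(tB) as its upper-left n×n block, the column vector 𝟙 − exp(tB)𝟙 as its upper-right block, zeros in the last row except for a 1 in the bottom-right entry. -/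
open Matrix NormedSpace

/-- The all-ones column vector, as an `n × 1` matrix. -/
def onesCol (n : ℕ) : Matrix (Fin n) (Fin 1) ℝ := Matrix.of fun _ _ => (1 : ℝ)

section aux

attribute [local instance] Matrix.linftyOpNormedRing Matrix.linftyOpNormedAlgebra

/-- `(A, D) ↦ fromBlocks A 0 0 D` as an `ℝ`-algebra hom. -/
def blockDiagHom (n : ℕ) :
    (Matrix (Fin n) (Fin n) ℝ × Matrix (Fin 1) (Fin 1) ℝ) →ₐ[ℝ]
      Matrix (Fin n ⊕ Fin 1) (Fin n ⊕ Fin 1) ℝ where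
  toFun p := Matrix.fromBlocks p.1 0 0 p.2
  map_one' := Matrix.fromBlocks_one
  map_mul' p q := by
    simp [Matrix.fromBlocks_multiply]
  map_zero' := by simp
  map_add' p q := by
    simp [Matrix.fromBlocks_add]
  commutes' r := by
    ext (i | i) (j | j) <;>
      simp [Matrix.algebraMap_eq_diagonal, Matrix.fromBlocks, Matrix.diagonal]

lemma exp_fromBlocks_diag {n : ℕ} (A : Matrix (Fin n) (Fin n) ℝ)
    (D : Matrix (Fin 1) (Fin 1) ℝ) :
    exp (Matrix.fromBlocks A 0 0 D) = Matrix.fromBlocks (exp A) 0 0 (exp D) := by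
  have hc : Continuous (blockDiagHom n) := by
    apply Continuous.matrix_fromBlocks
    · exact continuous_fst
    · exact continuous_const
    · exact continuous_const
    · exact continuous_snd
  have := map_exp (blockDiagHom n) hc (A, D)
  simp only [blockDiagHom, AlgHom.coe_mk, RingHom.coe_mk, MonoidHom.coe_mk, OneHom.coe_mk]
    at this
  have h1 : (exp (A, D)).1 = exp A := Prod.fst_exp (A, D)
  have h2 : (exp (A, D)).2 = exp D := Prod.snd_exp (A, D)
  exact this.symm.trans (congrArg₂ (fun X Y => Matrix.fromBlocks X 0 0 Y) h1 h2)

end aux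

/-- Block structure of the exponential of an intensity matrix
`Q = fromBlocks B (-B 𝟙) 0 0`. -/
theorem exp_fromBlocks_intensity {n : ℕ} (B : Matrix (Fin n) (Fin n) ℝ)
    (Q : Matrix (Fin n ⊕ Fin 1) (Fin n ⊕ Fin 1) ℝ)
    (hQ : Q = Matrix.fromBlocks B (-(B * onesCol n)) 0 0) (t : ℝ) :
    NormedSpace.exp (t • Q) =
      Matrix.fromBlocks (NormedSpace.exp (t • B)) (onesCol n - NormedSpace.exp (t • B) * onesCol n) 0 1 := by
  set P : Matrix (Fin n ⊕ Fin 1) (Fin n ⊕ Fin 1) ℝ :=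
    Matrix.fromBlocks 1 (onesCol n) 0 1 with hP
  set P' : Matrix (Fin n ⊕ Fin 1) (Fin n ⊕ Fin 1) ℝ :=
    Matrix.fromBlocks 1 (-(onesCol n)) 0 1 with hP'
  have hPP' : P * P' = 1 := by
    simp [hP, hP', Matrix.fromBlocks_multiply, ← Matrix.fromBlocks_one]
  have hP'P : P' * P = 1 := by
    simp [hP, hP', Matrix.fromBlocks_multiply, ← Matrix.fromBlocks_one]
  have hUnit : IsUnit P := ⟨⟨P, P', hPP', hP'P⟩, rfl⟩
  have hInv : P⁻¹ = P' := Matrix.inv_eq_right_inv hPP'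
  have hconj : t • Q = P * Matrix.fromBlocks (t • B) 0 0 0 * P' := by
    rw [hQ]
    simp [hP, hP', Matrix.fromBlocks_multiply, Matrix.fromBlocks_smul, Matrix.smul_mul,
      Matrix.mul_smul]
  rw [hconj, ← hInv, Matrix.exp_conj P _ hUnit, hInv,
    exp_fromBlocks_diag, exp_zero]
  simp [hP, hP', Matrix.fromBlocks_multiply, sub_eq_neg_add]
end

section
/- Let Q be an N×N complex matrix whose characteristic polynomial has N pairwise distinct roots λ_1,…,λ_N ∈ ℂ. Then for every t ∈ ℝ, exp(t·Q) = Σ_{l=1}^N exp(λ_l·t) · ∏_{j≠l} (Q − λ_j·I)/(λ_l − λ_j), where the product over j ≠ l is taken in the (commuting) algebra generated by Q and I (Lagrange–Sylvester formula). -/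
open Matrix NormedSpace Polynomial Nat

set_option maxRecDepth 8000

/-- If `A * P = c • P` in a matrix algebra over `ℂ`, then `exp ℂ A * P = Complex.exp c • P`. -/
theorem exp_mul_eq_of_mul_eq_smul_aux {N : ℕ} (A P : Matrix (Fin N) (Fin N) ℂ) (c : ℂ)
    (h : A * P = c • P) : NormedSpace.exp A * P = Complex.exp c • P := by
  letI : SeminormedRing (Matrix (Fin N) (Fin N) ℂ) := Matrix.linftyOpSemiNormedRing
  letI : NormedRing (Matrix (Fin N) (Fin N) ℂ) := Matrix.linftyOpNormedRing
  letI : NormedAlgebra ℂ (Matrix (Fin N) (Fin N) ℂ) := Matrix.linftyOpNormedAlgebra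
  have hn : ∀ n : ℕ, A ^ n * P = c ^ n • P := by
    intro n
    induction n with
    | zero => simp
    | succ n ih =>
        rw [pow_succ, mul_assoc, h, mul_smul_comm, ih, smul_smul, mul_comm c, ← pow_succ]
  have hs : Summable fun n : ℕ => ((n ! : ℂ))⁻¹ • A ^ n := expSeries_summable' A
  have hs2 : Summable fun n : ℕ => ((n ! : ℂ))⁻¹ • c ^ n := expSeries_summable' c
  rw [Complex.exp_eq_exp_ℂ, exp_eq_tsum (𝕂 := ℂ), exp_eq_tsum (𝕂 := ℂ)]
  rw [← hs.tsum_mul_right P]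
  have h3 : ∀ n : ℕ, (((n ! : ℂ))⁻¹ • A ^ n) * P = (((n ! : ℂ))⁻¹ • c ^ n) • P := by
    intro n
    rw [smul_mul_assoc, hn, smul_smul, smul_eq_mul]
  rw [tsum_congr h3, Summable.tsum_smul_const hs2 P]

/-- Lagrange–Sylvester formula: if the characteristic polynomial of `Q` has `N` pairwise
distinct roots `lam 1, …, lam N`, then `exp (t Q)` is the sum over `l` of
`exp (lam l * t)` times the Lagrange interpolation coefficient `∏_{j ≠ l} (Q - lam j I)/(lam l - lam j)`
(an ordered product of pairwise commuting factors). -/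
theorem exp_eq_lagrange_sylvester {N : ℕ} (Q : Matrix (Fin N) (Fin N) ℂ)
    (lam : Fin N → ℂ) (hdist : Function.Injective lam)
    (hchar : Q.charpoly = ∏ l, (X - C (lam l))) (t : ℝ) :
    NormedSpace.exp ((t : ℂ) • Q) =
      ∑ l, Complex.exp (lam l * t) •
        (((List.finRange N).filter (fun j => j ≠ l)).map
          (fun j => (lam l - lam j)⁻¹ • (Q - lam j • (1 : Matrix (Fin N) (Fin N) ℂ)))).prod := by
  rcases Nat.eq_zero_or_pos N with hN | hN
  · subst hN; exact Subsingleton.elim _ _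
  set P : Fin N → Matrix (Fin N) (Fin N) ℂ :=
    fun l => aeval Q (Lagrange.basis Finset.univ lam l) with hP
  -- the list products equal P l
  have hlist : ∀ l : Fin N,
      (((List.finRange N).filter (fun j => j ≠ l)).map
        (fun j => (lam l - lam j)⁻¹ • (Q - lam j • (1 : Matrix (Fin N) (Fin N) ℂ)))).prod
        = P l := by
    intro l
    have h1 : ∀ j : Fin N,
        (lam l - lam j)⁻¹ • (Q - lam j • (1 : Matrix (Fin N) (Fin N) ℂ))
          = aeval Q (Lagrange.basisDivisor (lam l) (lam j)) := by
      intro j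
      rw [Lagrange.basisDivisor, _root_.map_mul, aeval_C, map_sub, aeval_X, aeval_C,
        Algebra.algebraMap_eq_smul_one, Algebra.algebraMap_eq_smul_one, smul_mul_assoc, one_mul]
    simp_rw [h1]
    calc (((List.finRange N).filter (fun j => j ≠ l)).map
            (fun j => aeval Q (Lagrange.basisDivisor (lam l) (lam j)))).prod
        = ((((List.finRange N).filter (fun j => j ≠ l)).map
            (fun j => Lagrange.basisDivisor (lam l) (lam j))).map (aeval Q)).prod := by
          rw [List.map_map]; rfl
      _ = aeval Q (((List.finRange N).filter (fun j => j ≠ l)).map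
            (fun j => Lagrange.basisDivisor (lam l) (lam j))).prod :=
          (map_list_prod (aeval Q : Polynomial ℂ →ₐ[ℂ] Matrix (Fin N) (Fin N) ℂ) _).symm
      _ = P l := by
          rw [hP]
          congr 1
          rw [Lagrange.basis, ← Finset.filter_ne']
          simp [Finset.prod, Finset.filter, Finset.univ, Fin.fintype, Fintype.elems]
  -- sum of projections is 1
  have hsum : ∑ l, P l = 1 := by
    rw [hP, ← map_sum,
      Lagrange.sum_basis hdist.injOn ⟨⟨0, hN⟩, Finset.mem_univ _⟩, _root_.map_one]
  -- Q * P l = lam l • P l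
  have hQP : ∀ l, Q * P l = lam l • P l := by
    intro l
    have key : (X - C (lam l)) * Lagrange.basis Finset.univ lam l
        = C (∏ j ∈ Finset.univ.erase l, (lam l - lam j)⁻¹) * ∏ j, (X - C (lam j)) := by
      rw [Lagrange.basis]
      simp_rw [Lagrange.basisDivisor]
      rw [Finset.prod_mul_distrib,
        ← Finset.mul_prod_erase _ (fun j => X - C (lam j)) (Finset.mem_univ l), map_prod]
      ring
    have h0 : aeval Q ((X - C (lam l)) * Lagrange.basis Finset.univ lam l) = 0 := by
      rw [key, _root_.map_mul, ← hchar, aeval_self_charpoly, mul_zero]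
    rw [_root_.map_mul, map_sub, aeval_X, aeval_C, Algebra.algebraMap_eq_smul_one,
      sub_mul, smul_mul_assoc, one_mul, sub_eq_zero] at h0
    exact h0
  -- exp acts on each projection as the scalar exponential
  have hexp : ∀ l, NormedSpace.exp ((t : ℂ) • Q) * P l = Complex.exp (lam l * t) • P l := by
    intro l
    apply exp_mul_eq_of_mul_eq_smul_aux
    rw [smul_mul_assoc, hQP, smul_smul, mul_comm]
  calc NormedSpace.exp ((t : ℂ) • Q) = NormedSpace.exp ((t : ℂ) • Q) * 1 := (mul_one _).symm
    _ = ∑ l, NormedSpace.exp ((t : ℂ) • Q) * P l := by rw [← hsum, Finset.mul_sum]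
    _ = ∑ l, Complex.exp (lam l * t) • P l := by simp_rw [hexp]
    _ = _ := by
        refine Finset.sum_congr rfl fun l _ => ?_
        rw [hlist l]
end

section
/- Let B be an n×n real matrix that is negative stable and let λ ≥ 0 be a real number. Then λ·I − B is invertible, the function t ↦ e^{−λt}·exp(t·B) is integrable on [0,∞), and ∫_0^∞ e^{−λt}·exp(t·B) dt = (λ·I − B)⁻¹. -/
open Matrix NormedSpace MeasureTheory

attribute [local instance] Matrix.frobeniusNormedAddCommGroup Matrix.frobeniusNormedSpace

/-- A real square matrix is negative stable if every complex root of its characteristic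
polynomial has strictly negative real part. -/
def NegStable {n : ℕ} (B : Matrix (Fin n) (Fin n) ℝ) : Prop :=
  ∀ z : ℂ, (B.charpoly.map (algebraMap ℝ ℂ)).IsRoot z → z.re < 0

section

open Polynomial Nat
open scoped NNReal ENNReal

attribute [local instance] Matrix.frobeniusNormedRing Matrix.frobeniusNormedAlgebra

lemma my_eval_charpoly {n : ℕ} {R : Type*} [CommRing R] (M : Matrix (Fin n) (Fin n) R) (x : R) :
    M.charpoly.eval x = (x • (1 : Matrix (Fin n) (Fin n) R) - M).det := by
  rw [Matrix.charpoly, ← Polynomial.coe_evalRingHom, RingHom.map_det]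
  congr 1
  ext i j
  by_cases h : i = j <;>
    simp [Matrix.charmatrix_apply, h, Matrix.one_apply, Matrix.diagonal_apply, smul_eq_mul]

lemma my_mem_spectrum_iff_isRoot {n : ℕ} {K : Type*} [Field K] {M : Matrix (Fin n) (Fin n) K}
    {μ : K} : μ ∈ spectrum K M ↔ M.charpoly.IsRoot μ := by
  rw [spectrum.mem_iff, Algebra.algebraMap_eq_smul_one, Matrix.isUnit_iff_isUnit_det,
    isUnit_iff_ne_zero, not_ne_iff, Polynomial.IsRoot, my_eval_charpoly]

lemma my_mem_spectrum_iff_exists {n : ℕ} {K : Type*} [Field K] [DecidableEq K]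
    {M : Matrix (Fin n) (Fin n) K} {μ : K} :
    μ ∈ spectrum K M ↔ ∃ v, v ≠ 0 ∧ M *ᵥ v = μ • v := by
  rw [spectrum.mem_iff, Algebra.algebraMap_eq_smul_one, Matrix.isUnit_iff_isUnit_det,
    isUnit_iff_ne_zero, not_ne_iff, ← Matrix.exists_mulVec_eq_zero_iff]
  constructor
  · rintro ⟨v, hv, h⟩
    refine ⟨v, hv, ?_⟩
    rw [sub_mulVec, Matrix.smul_mulVec, one_mulVec, sub_eq_zero] at h
    exact h.symm
  · rintro ⟨v, hv, h⟩
    exact ⟨v, hv, by rw [sub_mulVec, Matrix.smul_mulVec, one_mulVec, h, sub_self]⟩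

lemma my_exp_mulVec_eigen {n : ℕ} (A : Matrix (Fin n) (Fin n) ℂ) {ζ : ℂ} {v : Fin n → ℂ}
    (hv : A *ᵥ v = ζ • v) : exp A *ᵥ v = Complex.exp ζ • v := by
  have hpow : ∀ k : ℕ, A ^ k *ᵥ v = ζ ^ k • v := by
    intro k
    induction k with
    | zero => simp
    | succ k ih =>
      rw [pow_succ, ← Matrix.mulVec_mulVec, hv, Matrix.mulVec_smul, ih, smul_smul, pow_succ,
        mul_comm]
  let L : Matrix (Fin n) (Fin n) ℂ →L[ℂ] (Fin n → ℂ) :=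
    LinearMap.toContinuousLinearMap
      { toFun := fun N => N *ᵥ v
        map_add' := fun N₁ N₂ => add_mulVec _ _ _
        map_smul' := fun c N => by simpa using Matrix.smul_mulVec c N v }
  have hL : exp A *ᵥ v = L (exp A) := rfl
  rw [hL, exp_eq_tsum ℂ, L.map_tsum (expSeries_summable' A)]
  have h1 : ∀ k : ℕ, L (((k ! : ℂ))⁻¹ • A ^ k) = (((k ! : ℂ))⁻¹ * ζ ^ k) • v := by
    intro k
    rw [_root_.map_smul]
    show ((k ! : ℂ))⁻¹ • (A ^ k *ᵥ v) = _
    rw [hpow, smul_smul]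
  rw [tsum_congr h1, Summable.tsum_smul_const]
  · congr 1
    have h2 := exp_eq_tsum (𝕂 := ℂ) (𝔸 := ℂ)
    rw [← Complex.exp_eq_exp_ℂ] at h2
    rw [h2]
    simp [smul_eq_mul]
  · simpa [smul_eq_mul] using expSeries_summable' (𝕂 := ℂ) ζ

lemma my_spectrum_exp_subset {n : ℕ} (A : Matrix (Fin n) (Fin n) ℂ) {μ : ℂ}
    (hμ : μ ∈ spectrum ℂ (exp A)) : ∃ ζ ∈ spectrum ℂ A, μ = Complex.exp ζ := by
  obtain ⟨v₀, hv₀, hv₀eq⟩ := my_mem_spectrum_iff_exists.mp hμ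
  let V : Submodule ℂ (Fin n → ℂ) :=
    LinearMap.ker ((exp A).mulVecLin - μ • LinearMap.id)
  have hmemV : ∀ w, w ∈ V ↔ exp A *ᵥ w = μ • w := by
    intro w
    simp only [V, LinearMap.mem_ker, LinearMap.sub_apply, LinearMap.smul_apply,
      LinearMap.id_apply, Matrix.mulVecLin_apply, sub_eq_zero]
  have hcomm : A * exp A = exp A * A := ((Commute.refl A).exp_right).eq
  have hinv : ∀ w ∈ V, A.mulVecLin w ∈ V := by
    intro w hw
    rw [hmemV] at hw ⊢
    show exp A *ᵥ (A *ᵥ w) = μ • (A *ᵥ w)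
    rw [Matrix.mulVec_mulVec, ← hcomm, ← Matrix.mulVec_mulVec, hw, Matrix.mulVec_smul]
  let g : Module.End ℂ V := (A.mulVecLin).restrict hinv
  have hv₀V : v₀ ∈ V := (hmemV v₀).mpr hv₀eq
  have : Nontrivial V := Submodule.nontrivial_iff_ne_bot.mpr
    (fun h => hv₀ ((Submodule.mem_bot ℂ).mp (h ▸ hv₀V)))
  obtain ⟨ζ, hζ⟩ := Module.End.exists_eigenvalue g
  obtain ⟨w, hw⟩ := hζ.exists_hasEigenvector
  have hgw : g w = ζ • w := hw.apply_eq_smul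
  have hu : (w : Fin n → ℂ) ≠ 0 := fun h => hw.2 (Subtype.ext h)
  have hAu : A *ᵥ (w : Fin n → ℂ) = ζ • (w : Fin n → ℂ) := by
    have h3 : ((g w : V) : Fin n → ℂ) = A *ᵥ (w : Fin n → ℂ) := rfl
    rw [hgw] at h3
    rw [← h3]
    exact Submodule.coe_smul ζ w
  have hEu : exp A *ᵥ (w : Fin n → ℂ) = μ • (w : Fin n → ℂ) := (hmemV _).mp w.2
  have h4 := my_exp_mulVec_eigen A hAu
  have hμζ : μ = Complex.exp ζ := by
    have h2 : μ • (w : Fin n → ℂ) = Complex.exp ζ • (w : Fin n → ℂ) := by rw [← hEu, h4]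
    exact smul_left_injective ℂ hu h2
  exact ⟨ζ, my_mem_spectrum_iff_exists.mpr ⟨w, hu, hAu⟩, hμζ⟩

lemma my_decay {n : ℕ} (A : Matrix (Fin n) (Fin n) ℝ)
    (hA : ∀ z : ℂ, z ∈ spectrum ℂ (A.map (algebraMap ℝ ℂ)) → z.re < 0) :
    ∃ C ε : ℝ, 0 < ε ∧ ∀ t : ℝ, 0 ≤ t → ‖exp (t • A)‖ ≤ C * Real.exp (-ε * t) := by
  set Ac := A.map (algebraMap ℝ ℂ) with hAcdef
  have hfin : (spectrum ℂ Ac).Finite :=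
    (Polynomial.finite_setOf_isRoot (Matrix.charpoly_monic Ac).ne_zero).subset
      (fun z hz => my_mem_spectrum_iff_isRoot.mp hz)
  set T := hfin.toFinset with hTdef
  set q : ℝ≥0 := T.sup (fun ζ => ‖Complex.exp ζ‖₊) with hqdef
  have hq1 : q < 1 := by
    rw [hqdef, Finset.sup_lt_iff (show (⊥ : ℝ≥0) < 1 by norm_num)]
    intro ζ hζ
    have hre : ζ.re < 0 := hA ζ (hfin.mem_toFinset.mp hζ)
    rw [← NNReal.coe_lt_coe]
    simpa [coe_nnnorm, Complex.norm_exp] using Real.exp_lt_one_iff.mpr hre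
  set E := exp Ac with hEdef
  have hrad : spectralRadius ℂ E ≤ (q : ℝ≥0∞) := by
    rw [spectralRadius]
    refine iSup₂_le fun μ hμ => ?_
    obtain ⟨ζ, hζ, rfl⟩ := my_spectrum_exp_subset Ac hμ
    exact ENNReal.coe_le_coe.mpr
      (Finset.le_sup (f := fun ζ => ‖Complex.exp ζ‖₊) (hfin.mem_toFinset.mpr hζ))
  set c : ℝ≥0 := (q + 1) / 2 with hcdef
  have hq1' : (q : ℝ) < 1 := by exact_mod_cast hq1
  have hqc : q < c := by
    rw [← NNReal.coe_lt_coe]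
    push_cast [hcdef]
    linarith
  have hc1 : (c : ℝ) < 1 := by
    push_cast [hcdef]
    linarith
  have hc0 : (0 : ℝ) < c := by
    push_cast [hcdef]
    positivity
  have hev : ∀ᶠ k : ℕ in Filter.atTop, ((‖E ^ k‖₊ : ℝ≥0∞)) ^ (1 / (k : ℝ)) < (c : ℝ≥0∞) :=
    (spectrum.pow_nnnorm_pow_one_div_tendsto_nhds_spectralRadius E).eventually_lt_const
      (lt_of_le_of_lt hrad (by exact_mod_cast ENNReal.coe_lt_coe.mpr hqc))
  obtain ⟨K, hK⟩ := Filter.eventually_atTop.mp hev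
  set K' := max K 1 with hK'def
  have hpowE : ∀ k : ℕ, K' ≤ k → ‖E ^ k‖ ≤ (c : ℝ) ^ k := by
    intro k hk
    have hk1 : 1 ≤ k := le_trans (le_max_right K 1) hk
    have hkK : K ≤ k := le_trans (le_max_left K 1) hk
    have h1 := ENNReal.rpow_le_rpow (hK k hkK).le (by positivity : (0:ℝ) ≤ (k:ℝ))
    rw [← ENNReal.rpow_mul, one_div,
      inv_mul_cancel₀ (by positivity : (k:ℝ) ≠ 0), ENNReal.rpow_one,
      ENNReal.rpow_natCast, ← ENNReal.coe_pow, ENNReal.coe_le_coe] at h1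
    exact_mod_cast h1
  -- transfer to the real side
  let Ψ : Matrix (Fin n) (Fin n) ℝ →ₐ[ℝ] Matrix (Fin n) (Fin n) ℂ :=
    (Algebra.ofId ℝ ℂ).mapMatrix
  have hΨc : Continuous Ψ := LinearMap.continuous_of_finiteDimensional Ψ.toLinearMap
  have hΨ_apply : ∀ M : Matrix (Fin n) (Fin n) ℝ, Ψ M = M.map (algebraMap ℝ ℂ) := fun M => rfl
  have hmapexp : ∀ M : Matrix (Fin n) (Fin n) ℝ,
      (exp M).map (algebraMap ℝ ℂ) = exp (M.map (algebraMap ℝ ℂ)) := by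
    intro M
    rw [← hΨ_apply, ← hΨ_apply]; exact map_exp Ψ hΨc M
  have hnorm : ∀ M : Matrix (Fin n) (Fin n) ℝ, ‖M‖ = ‖M.map (algebraMap ℝ ℂ)‖ := fun M =>
    (Matrix.frobenius_norm_map_eq M _ (fun a => Complex.norm_real a)).symm
  have hpowR : ∀ k : ℕ, K' ≤ k → ‖exp A ^ k‖ ≤ (c : ℝ) ^ k := by
    intro k hk
    rw [hnorm]
    have h8 : (exp A ^ k).map (algebraMap ℝ ℂ) = E ^ k := by
      rw [← hΨ_apply, map_pow, hΨ_apply, hmapexp, hEdef, hAcdef]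
    rw [h8]
    exact hpowE k hk
  have hcont : Continuous fun t : ℝ => exp (t • A) :=
    exp_continuous.comp (continuous_id.smul continuous_const)
  obtain ⟨M1, hM1⟩ := (isCompact_Icc (a := (0:ℝ)) (b := 1)).exists_bound_of_continuousOn
    hcont.continuousOn
  obtain ⟨M0, hM0⟩ := (isCompact_Icc (a := (0:ℝ)) (b := (K':ℝ) + 1)).exists_bound_of_continuousOn
    hcont.continuousOn
  have hM1' : 0 ≤ M1 := le_trans (norm_nonneg _) (hM1 0 ⟨le_rfl, zero_le_one⟩)
  have hM0' : 0 ≤ M0 := le_trans (norm_nonneg _) (hM0 0 ⟨le_rfl, by positivity⟩)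
  set ε := -Real.log (c : ℝ) with hεdef
  have hε : 0 < ε := by
    have := Real.log_neg hc0 hc1
    simp only [hεdef]
    linarith
  refine ⟨max (M1 * Real.exp ε) (M0 * Real.exp (ε * ((K':ℝ) + 1))), ε, hε, ?_⟩
  intro t ht
  by_cases hcase : t ≤ (K':ℝ) + 1
  · have h5 : (1:ℝ) ≤ Real.exp (ε * ((K':ℝ)+1) + -ε * t) := by
      apply Real.one_le_exp
      nlinarith
    calc ‖exp (t • A)‖ ≤ M0 := hM0 t ⟨ht, hcase⟩
      _ ≤ M0 * Real.exp (ε * ((K':ℝ)+1)) * Real.exp (-ε * t) := by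
          rw [mul_assoc, ← Real.exp_add]
          exact le_mul_of_one_le_right hM0' h5
      _ ≤ max (M1 * Real.exp ε) (M0 * Real.exp (ε * ((K':ℝ) + 1))) * Real.exp (-ε * t) :=
          mul_le_mul_of_nonneg_right (le_max_right _ _) (Real.exp_nonneg _)
  · push_neg at hcase
    set k := ⌊t⌋₊ with hkdef
    have hkK' : K' ≤ k := by
      have h9 : ((K' + 1 : ℕ) : ℝ) ≤ t := by push_cast; linarith
      have := Nat.le_floor h9
      omega
    have hk_le_t : (k : ℝ) ≤ t := Nat.floor_le ht
    have ht_lt : t < (k : ℝ) + 1 := Nat.lt_floor_add_one t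
    have hsplit : exp (t • A) = exp A ^ k * exp ((t - (k:ℝ)) • A) := by
      have h6 : t • A = (k : ℝ) • A + (t - (k : ℝ)) • A := by
        rw [← add_smul]
        congr 1
        ring
      erw [h6, NormedSpace.exp_add_of_commute (((Commute.refl A).smul_left _).smul_right _),
        Nat.cast_smul_eq_nsmul, NormedSpace.exp_nsmul]
      rfl
    have h7 : (c : ℝ) ^ k = Real.exp (-ε * k) := by
      have : -ε * (k:ℝ) = Real.log ((c:ℝ) ^ k) := by
        rw [Real.log_pow]
        simp [hεdef]
        ring
      rw [this, Real.exp_log (by positivity)]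
    have h10 : Real.exp (-ε * k) ≤ Real.exp ε * Real.exp (-ε * t) := by
      rw [← Real.exp_add]
      apply Real.exp_le_exp.mpr
      nlinarith
    rw [hsplit]
    calc ‖exp A ^ k * exp ((t - (k:ℝ)) • A)‖
        ≤ ‖exp A ^ k‖ * ‖exp ((t - (k:ℝ)) • A)‖ := norm_mul_le _ _
      _ ≤ (c : ℝ) ^ k * M1 := by
          apply mul_le_mul (hpowR k hkK') (hM1 _ ⟨by linarith, by linarith⟩) (norm_nonneg _)
            (by positivity)
      _ ≤ (M1 * Real.exp ε) * Real.exp (-ε * t) := by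
          rw [h7]
          calc Real.exp (-ε * k) * M1 ≤ (Real.exp ε * Real.exp (-ε * t)) * M1 :=
                mul_le_mul_of_nonneg_right h10 hM1'
            _ = (M1 * Real.exp ε) * Real.exp (-ε * t) := by ring
      _ ≤ max (M1 * Real.exp ε) (M0 * Real.exp (ε * ((K':ℝ) + 1))) * Real.exp (-ε * t) :=
          mul_le_mul_of_nonneg_right (le_max_left _ _) (Real.exp_nonneg _)

end

/-- For a negative stable matrix `B` and `λ ≥ 0`, `λ I - B` is invertible,
`t ↦ e^{-λ t} exp (t B)` is integrable on `[0, ∞)`, and its integral is `(λ I - B)⁻¹`. -/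
theorem integral_exp_neg_smul_exp_of_negStable {n : ℕ} (B : Matrix (Fin n) (Fin n) ℝ)
    (hB : NegStable B) (lam : ℝ) (hlam : 0 ≤ lam) :
    IsUnit (lam • (1 : Matrix (Fin n) (Fin n) ℝ) - B) ∧
    @IntegrableOn _ _ _ _ SeminormedAddGroup.toContinuousENorm
      (fun t : ℝ => Real.exp (-lam * t) • exp (t • B)) (Set.Ici 0) volume ∧
    ∫ t : ℝ in Set.Ici 0, Real.exp (-lam * t) • exp (t • B) =
      (lam • (1 : Matrix (Fin n) (Fin n) ℝ) - B)⁻¹ := by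
  letI : NormedRing (Matrix (Fin n) (Fin n) ℝ) := Matrix.frobeniusNormedRing
  letI : NormedAlgebra ℝ (Matrix (Fin n) (Fin n) ℝ) := Matrix.frobeniusNormedAlgebra
  letI : NormedAlgebra ℚ (Matrix (Fin n) (Fin n) ℝ) := Matrix.frobeniusNormedAlgebra
  set N := lam • (1 : Matrix (Fin n) (Fin n) ℝ) - B with hNdef
  set A := B - lam • (1 : Matrix (Fin n) (Fin n) ℝ) with hAdef
  -- spectrum condition for A
  have hAc : A.map (algebraMap ℝ ℂ) = B.map (algebraMap ℝ ℂ) - (lam : ℂ) • 1 := by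
    ext i j
    by_cases h : i = j <;> simp [hAdef, Matrix.one_apply, h]
  have hspec : ∀ z : ℂ, z ∈ spectrum ℂ (A.map (algebraMap ℝ ℂ)) → z.re < 0 := by
    intro z hz
    have h2 : z + lam ∈ spectrum ℂ (B.map (algebraMap ℝ ℂ)) := by
      rw [spectrum.mem_iff] at hz ⊢
      have heq : algebraMap ℂ (Matrix (Fin n) (Fin n) ℂ) z - A.map (algebraMap ℝ ℂ) =
          algebraMap ℂ (Matrix (Fin n) (Fin n) ℂ) (z + lam) - B.map (algebraMap ℝ ℂ) := by
        rw [hAc, Algebra.algebraMap_eq_smul_one, Algebra.algebraMap_eq_smul_one, add_smul]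
        abel
      rw [← heq]
      exact hz
    have h3 := my_mem_spectrum_iff_isRoot.mp h2
    rw [Matrix.charpoly_map] at h3
    have h4 := hB (z + lam) h3
    simp only [Complex.add_re, Complex.ofReal_re] at h4
    linarith
  -- invertibility
  have hdet : N.det ≠ 0 := by
    intro h0
    have h1 : B.charpoly.eval lam = 0 := by rw [my_eval_charpoly]; exact h0
    have h2 : (B.charpoly.map (algebraMap ℝ ℂ)).IsRoot (lam : ℂ) := by
      show Polynomial.eval _ _ = 0
      rw [show ((lam : ℝ) : ℂ) = algebraMap ℝ ℂ lam from rfl, Polynomial.eval_map,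
        Polynomial.eval₂_at_apply, h1, map_zero]
    have := hB _ h2
    simp only [Complex.ofReal_re] at this
    linarith
  have hNunit : IsUnit N := (Matrix.isUnit_iff_isUnit_det N).mpr (isUnit_iff_ne_zero.mpr hdet)
  -- pointwise identity
  have hfun : (fun t : ℝ => Real.exp (-lam * t) • exp (t • B)) =
      fun t : ℝ => exp (t • A) := by
    funext t
    have hcomm : Commute (t • A) ((t * lam) • (1 : Matrix (Fin n) (Fin n) ℝ)) :=
      ((Commute.one_right A).smul_left t).smul_right (t * lam)
    have hsplit : t • B = t • A + (t * lam) • (1 : Matrix (Fin n) (Fin n) ℝ) := by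
      rw [hAdef, smul_sub, smul_smul]
      abel
    erw [hsplit, NormedSpace.exp_add_of_commute hcomm]
    have hexp1 : exp ((t * lam) • (1 : Matrix (Fin n) (Fin n) ℝ)) =
        Real.exp (t * lam) • (1 : Matrix (Fin n) (Fin n) ℝ) := by
      erw [← Algebra.algebraMap_eq_smul_one, ← algebraMap_exp_comm, ← Algebra.algebraMap_eq_smul_one,
        Real.exp_eq_exp_ℝ]
    erw [hexp1, mul_smul_comm, mul_one, smul_smul, ← Real.exp_add, neg_mul, mul_comm t lam,
      neg_add_cancel, Real.exp_zero, one_smul]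
    rfl
  -- decay
  obtain ⟨C, ε, hε, hbound⟩ := my_decay A hspec
  have hcont : Continuous fun t : ℝ => exp (t • A) :=
    exp_continuous.comp (continuous_id.smul continuous_const)
  -- integrability
  have hint : @IntegrableOn _ _ _ _ SeminormedAddGroup.toContinuousENorm
      (fun t : ℝ => exp (t • A)) (Set.Ici 0) volume := by
    refine Integrable.mono' (g := fun t => C * Real.exp (-ε * t)) ?_
      (show @Continuous ℝ _ _ PseudoMetricSpace.toUniformSpace.toTopologicalSpace
        (fun t : ℝ => exp (t • A)) from hcont).aestronglyMeasurable.restrict ?_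
    · exact Iff.mpr integrableOn_Ici_iff_integrableOn_Ioi
        ((exp_neg_integrableOn_Ioi 0 hε).const_mul C)
    · exact (ae_restrict_iff' measurableSet_Ici).mpr (Filter.Eventually.of_forall
        fun t ht => hbound t ht)
  -- tendsto 0
  have htend : Filter.Tendsto (fun t : ℝ => exp (t • A)) Filter.atTop (nhds 0) := by
    have h1 : Filter.Tendsto (fun t : ℝ => ε * t) Filter.atTop Filter.atTop :=
      Filter.Tendsto.const_mul_atTop hε Filter.tendsto_id
    have h2 : Filter.Tendsto (fun t : ℝ => Real.exp (-ε * t)) Filter.atTop (nhds 0) := by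
      refine (Real.tendsto_exp_neg_atTop_nhds_zero.comp h1).congr fun t => ?_
      simp [Function.comp, neg_mul]
    have h3 : Filter.Tendsto (fun t : ℝ => C * Real.exp (-ε * t)) Filter.atTop (nhds 0) := by
      simpa using h2.const_mul C
    exact squeeze_zero_norm'
      (by filter_upwards [Filter.eventually_ge_atTop (0:ℝ)] with t ht using hbound t ht) h3
  -- FTC
  have hAN : A * N⁻¹ = -1 := by
    have hA_eq : A = -N := by rw [hNdef, hAdef, neg_sub]
    rw [hA_eq, neg_mul, Matrix.mul_nonsing_inv N (isUnit_iff_ne_zero.mpr hdet)]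
  have hderiv : ∀ t : ℝ, HasDerivAt (fun u : ℝ => -(exp (u • A) * N⁻¹)) (exp (t • A)) t := by
    intro t
    have h1 := hasDerivAt_exp_smul_const (𝕂 := ℝ) A t
    have h2 := (h1.mul_const (N⁻¹)).neg
    exact h2.congr_deriv (by rw [mul_assoc, hAN, mul_neg, mul_one, neg_neg]; rfl)
  have htend2 : Filter.Tendsto (fun t : ℝ => -(exp (t • A) * N⁻¹)) Filter.atTop (nhds 0) := by
    have hc : Continuous fun M : Matrix (Fin n) (Fin n) ℝ => -(M * N⁻¹) :=
      (continuous_id.mul continuous_const).neg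
    have := (hc.tendsto 0).comp htend
    rwa [zero_mul, neg_zero] at this
  have hIoi : ∫ t in Set.Ioi (0:ℝ), exp (t • A) = 0 - -(exp ((0:ℝ) • A) * N⁻¹) :=
    MeasureTheory.integral_Ioi_of_hasDerivAt_of_tendsto' (fun x _ => hderiv x)
      (hint.mono_set Set.Ioi_subset_Ici_self) htend2
  have hIoi' : ∫ t in Set.Ioi (0:ℝ), exp (t • A) = N⁻¹ := by
    rw [hIoi]
    simp [exp_zero]
  refine ⟨hNunit, ?_, ?_⟩
  · rw [hfun]; exact hint
  · rw [hfun, MeasureTheory.integral_Ici_eq_integral_Ioi, hIoi']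
end

section
/- Let B, H_1, H_2 be n×n real matrices, let a ∈ ℝⁿ and t ∈ ℝ be fixed, and define g : ℝ × ℝ → ℝ by g(t_1, t_2) = aᵀ·exp((t_2 − t)·B)·H_2·exp((t_1 − t_2)·B)·H_1·𝟙. Then for all t_1, t_2 ∈ ℝ the mixed partial derivative of g, taken first in t_1 and then in t_2, exists and equals ∂²g/∂t_2∂t_1 (t_1,t_2) = aᵀ·exp((t_2 − t)·B)·[B,H_2]·exp((t_1 − t_2)·B)·B·H_1·𝟙. -/
open Matrix NormedSpace

/-- The linear functional `x ↦ aᵀ x 𝟙` on matrices. -/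
noncomputable def bivariateL {n : ℕ} (a : Fin n → ℝ) :
    Matrix (Fin n) (Fin n) ℝ →ₗ[ℝ] ℝ where
  toFun x := a ⬝ᵥ (x *ᵥ fun _ => 1)
  map_add' x y := by simp [Matrix.add_mulVec, dotProduct_add]
  map_smul' c x := by simp [Matrix.smul_mulVec]

/-- Mixed partial derivative (first in `t₁`, then in `t₂`) of the conditional bivariate
survival function `g(t₁,t₂) = aᵀ exp((t₂−t)B) H₂ exp((t₁−t₂)B) H₁ 𝟙`: it exists and equals
`aᵀ exp((t₂−t)B) [B,H₂] exp((t₁−t₂)B) B H₁ 𝟙`. -/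
theorem mixed_partial_bivariate_survival {n : ℕ} (B H₁ H₂ : Matrix (Fin n) (Fin n) ℝ)
    (a : Fin n → ℝ) (t : ℝ) (g : ℝ → ℝ → ℝ)
    (hg : ∀ t₁ t₂, g t₁ t₂ =
      a ⬝ᵥ ((exp ((t₂ - t) • B) * H₂ * exp ((t₁ - t₂) • B) * H₁) *ᵥ fun _ => 1))
    (t₁ t₂ : ℝ) :
    DifferentiableAt ℝ (fun s₁ => g s₁ t₂) t₁ ∧
    HasDerivAt (fun s₂ => deriv (fun s₁ => g s₁ s₂) t₁)
      (a ⬝ᵥ ((exp ((t₂ - t) • B) * (B * H₂ - H₂ * B) * exp ((t₁ - t₂) • B) * B * H₁) *ᵥ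
        fun _ => 1)) t₂ := by
  letI : NormedRing (Matrix (Fin n) (Fin n) ℝ) := Matrix.linftyOpNormedRing
  letI : NormedAlgebra ℝ (Matrix (Fin n) (Fin n) ℝ) := Matrix.linftyOpNormedAlgebra
  set L : Matrix (Fin n) (Fin n) ℝ →L[ℝ] ℝ := (bivariateL a).toContinuousLinearMap with hL
  have hLval : ∀ x : Matrix (Fin n) (Fin n) ℝ, L x = a ⬝ᵥ (x *ᵥ fun _ => 1) := fun _ => rfl
  -- derivative of u ↦ exp ((u - c) • B)
  have hexp : ∀ c s : ℝ, HasDerivAt (fun u : ℝ => exp ((u - c) • B))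
      (exp ((s - c) • B) * B) s := fun c s => by
    have := (hasDerivAt_exp_smul_const (𝕂 := ℝ) B (s - c)).scomp s
      ((hasDerivAt_id s).sub_const c)
    simp only [one_smul, id] at this; exact this
  -- derivative of u ↦ exp ((c - u) • B)
  have hexp' : ∀ c s : ℝ, HasDerivAt (fun u : ℝ => exp ((c - u) • B))
      (-(exp ((c - s) • B) * B)) s := fun c s => by
    have := (hasDerivAt_exp_smul_const (𝕂 := ℝ) B (c - s)).scomp s
      ((hasDerivAt_const s c).sub (hasDerivAt_id s))
    simp only [zero_sub, neg_one_smul] at this; exact this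
  -- the partial derivative in the first variable, for any s₂
  have hpart : ∀ s₂ : ℝ, HasDerivAt (fun s₁ => g s₁ s₂)
      (L (exp ((s₂ - t) • B) * H₂ * (exp ((t₁ - s₂) • B) * B) * H₁)) t₁ := by
    intro s₂
    have h1 : HasDerivAt
        (fun s₁ : ℝ => exp ((s₂ - t) • B) * H₂ * exp ((s₁ - s₂) • B) * H₁)
        (exp ((s₂ - t) • B) * H₂ * (exp ((t₁ - s₂) • B) * B) * H₁) t₁ := by
      have := ((hexp s₂ t₁).const_mul (exp ((s₂ - t) • B) * H₂)).mul_const H₁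
      simp only [mul_assoc] at this ⊢; exact this
    have h2 := L.hasFDerivAt.comp_hasDerivAt t₁ h1
    have : (fun s₁ => g s₁ s₂) =
        fun s₁ => L (exp ((s₂ - t) • B) * H₂ * exp ((s₁ - s₂) • B) * H₁) :=
      funext fun s₁ => hg s₁ s₂
    rw [this]
    exact h2
  refine ⟨(hpart t₂).differentiableAt, ?_⟩
  have hderiv : (fun s₂ => deriv (fun s₁ => g s₁ s₂) t₁) =
      fun s₂ => L (exp ((s₂ - t) • B) * (H₂ * (exp ((t₁ - s₂) • B) * (B * H₁)))) := by
    funext s₂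
    rw [(hpart s₂).deriv]
    congr 1
    ring_nf
    simp [mul_assoc]
  rw [hderiv]
  -- derivative of the matrix-valued function of s₂
  have hF : HasDerivAt
      (fun s₂ => exp ((s₂ - t) • B) * (H₂ * (exp ((t₁ - s₂) • B) * (B * H₁))))
      (exp ((t₂ - t) • B) * B * (H₂ * (exp ((t₁ - t₂) • B) * (B * H₁))) +
        exp ((t₂ - t) • B) * (H₂ * (-(exp ((t₁ - t₂) • B) * B) * (B * H₁)))) t₂ := by
    exact (hexp t t₂).mul (((hexp' t₁ t₂).mul_const (B * H₁)).const_mul H₂)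
  have h2 := L.hasFDerivAt.comp_hasDerivAt t₂ hF
  have hc : exp ((t₁ - t₂) • B) * B = B * exp ((t₁ - t₂) • B) :=
    ((Commute.refl B).smul_left (t₁ - t₂)).exp_left
  have key : exp ((t₂ - t) • B) * B * (H₂ * (exp ((t₁ - t₂) • B) * (B * H₁))) +
        exp ((t₂ - t) • B) * (H₂ * (-(exp ((t₁ - t₂) • B) * B) * (B * H₁))) =
      exp ((t₂ - t) • B) * (B * H₂ - H₂ * B) * exp ((t₁ - t₂) • B) * B * H₁ := by
    have : H₂ * (-(exp ((t₁ - t₂) • B) * B) * (B * H₁)) =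
        -(H₂ * B * (exp ((t₁ - t₂) • B) * (B * H₁))) := by
      rw [hc]; noncomm_ring
    rw [this]
    noncomm_ring
  rw [key] at h2
  exact h2
end

section
/- Let n ≥ 1 and m ≥ 1. For each k ∈ {1,…,m}, let B_k be an n×n real matrix whose characteristic polynomial has n pairwise distinct real roots λ^k_1,…,λ^k_n; set λ̄_k = max_l λ^k_l, let l_k be the index attaining this maximum, and let L_k = ∏_{j ≠ l_k} (B_k − λ^k_j·I)/(λ̄_k − λ^k_j) be the Lagrange interpolation coefficient. Let a ∈ ℝⁿ and let S_1,…,S_m be n×n real matrices. Suppose there is k_0 such that λ̄_{k_0} > λ̄_k for all k ≠ k_0, and suppose aᵀ·S_{k_0}·L_{k_0}·𝟙 ≠ 0. Then for every index j, the denominator Σ_{k=1}^m aᵀ·S_k·exp(t·B_k)·𝟙 is nonzero for all sufficiently large t, and π_j(t) = (Σ_{k=1}^m aᵀ·S_k·exp(t·B_k)·e_j) / (Σ_{k=1}^m aᵀ·S_k·exp(t·B_k)·𝟙) tends to (aᵀ·S_{k_0}·L_{k_0}·e_j) / (aᵀ·S_{k_0}·L_{k_0}·𝟙) as t → ∞.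 -/
open Matrix NormedSpace Polynomial Filter

set_option maxHeartbeats 1000000 in
private lemma exp_mul_eq_of_mul_eq_zero {n : ℕ} (N P : Matrix (Fin n) (Fin n) ℝ)
    (h : N * P = 0) : exp N * P = P := by
  letI : SeminormedRing (Matrix (Fin n) (Fin n) ℝ) := Matrix.linftyOpSemiNormedRing
  letI : NormedRing (Matrix (Fin n) (Fin n) ℝ) := Matrix.linftyOpNormedRing
  letI : NormedAlgebra ℝ (Matrix (Fin n) (Fin n) ℝ) := Matrix.linftyOpNormedAlgebra
  rw [exp_eq_tsum ℝ]; beta_reduce; erw [← (expSeries_summable' (𝕂 := ℝ) N).tsum_mul_right]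
  rw [tsum_eq_single 0]
  · simp
  · intro k hk
    obtain ⟨k, rfl⟩ := Nat.exists_eq_succ_of_ne_zero hk
    rw [smul_mul_assoc, pow_succ, mul_assoc, h, mul_zero, smul_zero]

set_option maxHeartbeats 1000000 in
private lemma exp_smul_mul_proj {n : ℕ} (M P : Matrix (Fin n) (Fin n) ℝ) (lam : ℝ)
    (h : (M - lam • 1) * P = 0) (t : ℝ) :
    exp (t • M) * P = Real.exp (t * lam) • P := by
  have hsplit : t • M = (t * lam) • (1 : Matrix (Fin n) (Fin n) ℝ) + t • (M - lam • 1) := by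
    rw [smul_sub, smul_smul]; abel
  have hcomm : Commute ((t * lam) • (1 : Matrix (Fin n) (Fin n) ℝ)) (t • (M - lam • 1)) := by
    refine Commute.smul_left (Commute.smul_right ?_ t) (t * lam)
    exact Commute.one_left _
  rw [hsplit, Matrix.exp_add_of_commute _ _ hcomm]
  have h1 : exp ((t * lam) • (1 : Matrix (Fin n) (Fin n) ℝ)) =
      Real.exp (t * lam) • (1 : Matrix (Fin n) (Fin n) ℝ) := by
    letI : SeminormedRing (Matrix (Fin n) (Fin n) ℝ) := Matrix.linftyOpSemiNormedRing
    letI : NormedRing (Matrix (Fin n) (Fin n) ℝ) := Matrix.linftyOpNormedRing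
    letI : NormedAlgebra ℝ (Matrix (Fin n) (Fin n) ℝ) := Matrix.linftyOpNormedAlgebra
    have := algebraMap_exp_comm (𝕂 := ℝ) (𝔸 := Matrix (Fin n) (Fin n) ℝ) (t * lam)
    rw [Real.exp_eq_exp_ℝ]
    rw [Algebra.algebraMap_eq_smul_one, Algebra.algebraMap_eq_smul_one] at this
    exact this.symm
  have h2 : exp (t • (M - lam • 1)) * P = P :=
    exp_mul_eq_of_mul_eq_zero _ _ (by rw [smul_mul_assoc, h, smul_zero])
  rw [mul_assoc, h2, h1, smul_mul_assoc, one_mul]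

private lemma aeval_basis_eq {n : ℕ} (M : Matrix (Fin n) (Fin n) ℝ) (lam : Fin n → ℝ)
    (l : Fin n) :
    (aeval M) (Lagrange.basis Finset.univ lam l) =
    (((List.finRange n).filter (fun j => j ≠ l)).map
      (fun j => (lam l - lam j)⁻¹ • (M - lam j • 1))).prod := by
  rw [Lagrange.basis, ← Finset.filter_ne', Finset.prod_eq_multiset_prod]
  have huniv : (Finset.univ : Finset (Fin n)).val = (List.finRange n : Multiset (Fin n)) := by
    simp [Fin.univ_def]
  rw [Finset.filter_val, huniv, Multiset.filter_coe, Multiset.map_coe, Multiset.prod_coe]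
  rw [map_list_prod]
  rw [List.map_map]
  congr 1
  apply List.map_congr_left
  intro j hj
  simp only [Function.comp_apply, Lagrange.basisDivisor, _root_.map_mul, map_sub, aeval_X,
    aeval_C, Algebra.algebraMap_eq_smul_one, smul_mul_assoc, one_mul]

private lemma sum_aeval_basis {n : ℕ} (hn : 1 ≤ n) (M : Matrix (Fin n) (Fin n) ℝ)
    (lam : Fin n → ℝ) (hinj : Function.Injective lam) :
    ∑ l, (aeval M) (Lagrange.basis Finset.univ lam l) = 1 := by
  have h0 : (Finset.univ : Finset (Fin n)).Nonempty := ⟨⟨0, hn⟩, Finset.mem_univ _⟩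
  rw [← map_sum, Lagrange.sum_basis hinj.injOn h0, _root_.map_one]

private lemma sub_smul_mul_aeval_basis {n : ℕ} (M : Matrix (Fin n) (Fin n) ℝ)
    (lam : Fin n → ℝ) (hchar : M.charpoly = ∏ l, (X - C (lam l))) (l : Fin n) :
    (M - lam l • 1) * (aeval M) (Lagrange.basis Finset.univ lam l) = 0 := by
  have hb : (X - C (lam l)) * Lagrange.basis Finset.univ lam l
      = C (∏ j ∈ Finset.univ.erase l, (lam l - lam j)⁻¹) * ∏ j, (X - C (lam j)) := by
    rw [Lagrange.basis]
    simp_rw [Lagrange.basisDivisor]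
    rw [Finset.prod_mul_distrib, ← map_prod, ← mul_assoc, mul_comm (X - C (lam l)), mul_assoc,
      Finset.mul_prod_erase Finset.univ (fun x => X - C (lam x)) (Finset.mem_univ l)]
  have := congrArg (aeval M) hb
  rw [_root_.map_mul, _root_.map_mul, map_sub, aeval_X, aeval_C, ← hchar,
    Matrix.aeval_self_charpoly, mul_zero, Algebra.algebraMap_eq_smul_one] at this
  exact this

private lemma exp_smul_eq_sum {n : ℕ} (hn : 1 ≤ n) (M : Matrix (Fin n) (Fin n) ℝ)
    (lam : Fin n → ℝ) (hinj : Function.Injective lam)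
    (hchar : M.charpoly = ∏ l, (X - C (lam l))) (t : ℝ) :
    exp (t • M) =
      ∑ l, Real.exp (t * lam l) • (aeval M) (Lagrange.basis Finset.univ lam l) := by
  calc exp (t • M)
      = exp (t • M) * ∑ l, (aeval M) (Lagrange.basis Finset.univ lam l) := by
        rw [sum_aeval_basis hn M lam hinj, mul_one]
    _ = ∑ l, exp (t • M) * (aeval M) (Lagrange.basis Finset.univ lam l) := by
        rw [Finset.mul_sum]
    _ = ∑ l, Real.exp (t * lam l) • (aeval M) (Lagrange.basis Finset.univ lam l) :=
        Finset.sum_congr rfl fun l _ =>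
          exp_smul_mul_proj M _ (lam l) (sub_smul_mul_aeval_basis M lam hchar l) t

private lemma sum_mulVec' {n : ℕ} {ι : Type*} (s : Finset ι)
    (A : ι → Matrix (Fin n) (Fin n) ℝ) (v : Fin n → ℝ) :
    (∑ i ∈ s, A i) *ᵥ v = ∑ i ∈ s, A i *ᵥ v := by
  ext x
  simp [Matrix.mulVec, dotProduct, Finset.sum_apply, Matrix.sum_apply, Finset.sum_mul]
  rw [Finset.sum_comm]

private lemma dotProduct_sum' {n : ℕ} {ι : Type*} (s : Finset ι) (a : Fin n → ℝ)
    (v : ι → Fin n → ℝ) : a ⬝ᵥ (∑ i ∈ s, v i) = ∑ i ∈ s, a ⬝ᵥ v i := by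
  simp [dotProduct, Finset.mul_sum, Finset.sum_apply]
  rw [Finset.sum_comm]

/-- Stationary limit of the Bayesian update `π_j(t)` of the state distribution under
partial information (dominant-eigenvalue case of Proposition 2.5 of the paper). -/
theorem state_distribution_tendsto_stationary {n m : ℕ} (hn : 1 ≤ n) (hm : 1 ≤ m)
    (B : Fin m → Matrix (Fin n) (Fin n) ℝ) (lam : Fin m → Fin n → ℝ)
    (hdist : ∀ k, Function.Injective (lam k))
    (hchar : ∀ k, (B k).charpoly = ∏ l, (X - C (lam k l)))
    (lk : Fin m → Fin n) (hmax : ∀ k l, lam k l ≤ lam k (lk k))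
    (L : Fin m → Matrix (Fin n) (Fin n) ℝ)
    (hL : ∀ k, L k = (((List.finRange n).filter (fun j => j ≠ lk k)).map
      (fun j => (lam k (lk k) - lam k j)⁻¹ •
        (B k - lam k j • (1 : Matrix (Fin n) (Fin n) ℝ)))).prod)
    (a : Fin n → ℝ) (S : Fin m → Matrix (Fin n) (Fin n) ℝ)
    (k₀ : Fin m) (hdom : ∀ k, k ≠ k₀ → lam k (lk k) < lam k₀ (lk k₀))
    (hnz : a ⬝ᵥ ((S k₀ * L k₀) *ᵥ fun _ => 1) ≠ 0) (j : Fin n) :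
    (∀ᶠ t : ℝ in atTop, (∑ k, a ⬝ᵥ ((S k * exp (t • B k)) *ᵥ fun _ => 1)) ≠ 0) ∧
    Tendsto
      (fun t : ℝ =>
        (∑ k, a ⬝ᵥ ((S k * exp (t • B k)) *ᵥ Pi.single j 1)) /
          ∑ k, a ⬝ᵥ ((S k * exp (t • B k)) *ᵥ fun _ => 1))
      atTop
      (nhds ((a ⬝ᵥ ((S k₀ * L k₀) *ᵥ Pi.single j 1)) /
        (a ⬝ᵥ ((S k₀ * L k₀) *ᵥ fun _ => 1)))) := by
  classical
  set P : Fin m → Fin n → Matrix (Fin n) (Fin n) ℝ :=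
    fun k l => (aeval (B k)) (Lagrange.basis Finset.univ (lam k) l) with hP
  have hLP : ∀ k, L k = P k (lk k) := fun k => by
    rw [hL k]; exact (aeval_basis_eq (B k) (lam k) (lk k)).symm
  set lb := lam k₀ (lk k₀) with hlb
  set c : (Fin n → ℝ) → Fin m → Fin n → ℝ :=
    fun v k l => a ⬝ᵥ ((S k * P k l) *ᵥ v) with hc
  have hF : ∀ (v : Fin n → ℝ) (t : ℝ) (k : Fin m),
      a ⬝ᵥ ((S k * exp (t • B k)) *ᵥ v)
        = Real.exp (t * lb) * ∑ l, Real.exp (t * (lam k l - lb)) * c v k l := by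
    intro v t k
    rw [exp_smul_eq_sum hn (B k) (lam k) (hdist k) (hchar k) t, Finset.mul_sum, sum_mulVec',
      dotProduct_sum', Finset.mul_sum]
    refine Finset.sum_congr rfl fun l _ => ?_
    rw [Matrix.mul_smul, Matrix.smul_mulVec, dotProduct_smul, smul_eq_mul, ← mul_assoc,
      ← Real.exp_add]
    ring_nf
    rfl
  have hGlim : ∀ v : Fin n → ℝ,
      Tendsto (fun t => ∑ k, ∑ l, Real.exp (t * (lam k l - lb)) * c v k l) atTop
        (nhds (c v k₀ (lk k₀))) := by
    intro v
    have hlim : ∀ k l, Tendsto (fun t => Real.exp (t * (lam k l - lb)) * c v k l) atTop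
        (nhds (if k = k₀ ∧ l = lk k₀ then c v k₀ (lk k₀) else 0)) := by
      intro k l
      by_cases hk : k = k₀ ∧ l = lk k₀
      · obtain ⟨rfl, rfl⟩ := hk
        simp only [hlb, sub_self, mul_zero, Real.exp_zero, one_mul]; exact tendsto_const_nhds
      · rw [if_neg hk]
        have hneg : lam k l - lb < 0 := by
          rcases eq_or_ne k k₀ with rfl | hk'
          · have hne : l ≠ lk k := fun h => hk ⟨rfl, h⟩
            have h1 : lam k l < lam k (lk k) :=
              lt_of_le_of_ne (hmax k l) (fun h => hne (hdist k h))
            simpa [hlb] using sub_neg.mpr h1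
          · have h1 : lam k l < lb := lt_of_le_of_lt (hmax k l) (hdom k hk')
            simpa using sub_neg.mpr h1
        have h0 : Tendsto (fun t : ℝ => Real.exp (t * (lam k l - lb))) atTop (nhds 0) :=
          Real.tendsto_exp_atBot.comp (tendsto_id.atTop_mul_const_of_neg hneg)
        simpa using h0.mul_const (c v k l)
    have h := tendsto_finset_sum Finset.univ (fun k (_ : k ∈ Finset.univ) =>
      tendsto_finset_sum Finset.univ (fun l (_ : l ∈ Finset.univ) => hlim k l))
    have hval : ∑ k, ∑ l, (if k = k₀ ∧ l = lk k₀ then c v k₀ (lk k₀) else 0)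
        = c v k₀ (lk k₀) := by
      rw [Finset.sum_eq_single k₀ (fun b _ hb => by simp [hb]) (by simp)]
      rw [Finset.sum_eq_single (lk k₀) (fun b _ hb => by simp [hb]) (by simp)]
      simp
    rw [hval] at h
    exact h
  have hsum : ∀ (v : Fin n → ℝ) (t : ℝ),
      ∑ k, a ⬝ᵥ ((S k * exp (t • B k)) *ᵥ v)
        = Real.exp (t * lb) * ∑ k, ∑ l, Real.exp (t * (lam k l - lb)) * c v k l := by
    intro v t
    simp_rw [hF v t, ← Finset.mul_sum]
  have hnz' : c (fun _ => 1) k₀ (lk k₀) ≠ 0 := by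
    rw [hc]; dsimp only; rw [← hLP k₀]; exact hnz
  have hev : ∀ᶠ t : ℝ in atTop,
      (∑ k, ∑ l, Real.exp (t * (lam k l - lb)) * c (fun _ => 1) k l) ≠ 0 :=
    (hGlim (fun _ => 1)).eventually_ne hnz'
  constructor
  · filter_upwards [hev] with t ht
    rw [hsum]
    exact mul_ne_zero (Real.exp_ne_zero _) ht
  · have heq : (fun t : ℝ =>
        (∑ k, a ⬝ᵥ ((S k * exp (t • B k)) *ᵥ Pi.single j 1)) /
          ∑ k, a ⬝ᵥ ((S k * exp (t • B k)) *ᵥ fun _ => 1))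
        = fun t : ℝ =>
          (∑ k, ∑ l, Real.exp (t * (lam k l - lb)) * c (Pi.single j 1) k l) /
            ∑ k, ∑ l, Real.exp (t * (lam k l - lb)) * c (fun _ => 1) k l := by
      funext t
      rw [hsum, hsum, mul_div_mul_left _ _ (Real.exp_ne_zero _)]
    rw [heq]
    have hfin := (hGlim (Pi.single j 1)).div (hGlim (fun _ => 1)) hnz'
    have : (a ⬝ᵥ ((S k₀ * L k₀) *ᵥ Pi.single j 1)) / (a ⬝ᵥ ((S k₀ * L k₀) *ᵥ fun _ => 1))
        = c (Pi.single j 1) k₀ (lk k₀) / c (fun _ => 1) k₀ (lk k₀) := by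
      rw [hc]; dsimp only; rw [hLP k₀]
    rw [this]
    exact hfin
end

section
/- Let p ≥ 1, let B, H_1,…,H_p be n×n real matrices, and let t_0 ∈ ℝ be fixed. Define G : ℝᵖ → Matrix(n,n,ℝ) by G(t_1,…,t_p) = ∏_{l=1}^p exp((t_l − t_{l−1})·B)·H_l, the ordered product exp((t_1−t_0)B)H_1·exp((t_2−t_1)B)H_2 ⋯ exp((t_p−t_{p−1})B)H_p. Then at every (t_1,…,t_p) ∈ ℝᵖ, the iterated mixed partial derivative of G taken successively in the variables t_1, then t_2, …, then t_p exists and equals ∂ᵖG/∂t_p⋯∂t_1 (t_1,…,t_p) = (∏_{l=1}^{p−1} exp((t_l − t_{l−1})·B)·[B,H_l]) · exp((t_p − t_{p−1})·B)·B·H_p. -/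
open Matrix NormedSpace

attribute [local instance] Matrix.frobeniusNormedAddCommGroup Matrix.frobeniusNormedSpace
attribute [local instance] Matrix.frobeniusNormedRing Matrix.frobeniusNormedAlgebra

/-- The partial derivative, in the `i`-th coordinate, of a matrix-valued function of
`p` real variables. -/
noncomputable def pder {n p : ℕ} (i : Fin p)
    (F : (Fin p → ℝ) → Matrix (Fin n) (Fin n) ℝ) :
    (Fin p → ℝ) → Matrix (Fin n) (Fin n) ℝ :=
  fun x => deriv (fun s => F (Function.update x i s)) (x i)

namespace Thm317

variable {n p : ℕ}

/-- One factor of the ordered product, with coefficient function `c`. -/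
noncomputable def fac (B : Matrix (Fin n) (Fin n) ℝ) (t₀ : ℝ)
    (c : Fin p → Matrix (Fin n) (Fin n) ℝ) (t : Fin p → ℝ) (l : Fin p) :
    Matrix (Fin n) (Fin n) ℝ :=
  exp ((Matrix.vecCons t₀ t l.succ - Matrix.vecCons t₀ t l.castSucc) • B) * c l

/-- The coefficients after `k` partial derivatives. -/
noncomputable def Dc (B : Matrix (Fin n) (Fin n) ℝ)
    (H : Fin p → Matrix (Fin n) (Fin n) ℝ) (k : ℕ) (l : Fin p) :
    Matrix (Fin n) (Fin n) ℝ :=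
  if l.val < k then B * H l - H l * B else H l

/-- The ordered product after `k` partial derivatives, for `k < p`. -/
noncomputable def Pk (B : Matrix (Fin n) (Fin n) ℝ) (t₀ : ℝ)
    (H : Fin p → Matrix (Fin n) (Fin n) ℝ) (k : ℕ) (t : Fin p → ℝ) :
    Matrix (Fin n) (Fin n) ℝ :=
  ((List.finRange p).map (fac B t₀ (Dc B H k) t)).prod

lemma val_lt_of_mem_take {k : ℕ} {l : Fin p} (h : l ∈ (List.finRange p).take k) :
    l.val < k := by
  obtain ⟨i, hi, rfl⟩ := List.mem_iff_getElem.1 h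
  simp only [List.getElem_take, List.getElem_finRange, Fin.coe_cast] at *
  simp at hi
  omega

lemma le_val_of_mem_drop {k : ℕ} {l : Fin p} (h : l ∈ (List.finRange p).drop k) :
    k ≤ l.val := by
  obtain ⟨i, hi, rfl⟩ := List.mem_iff_getElem.1 h
  simp [List.getElem_drop, List.getElem_finRange]

lemma drop_finRange_eq (k : ℕ) (hk : k < p) :
    (List.finRange p).drop k = (⟨k, hk⟩ : Fin p) :: (List.finRange p).drop (k + 1) := by
  rw [List.drop_eq_getElem_cons (by simpa using hk)]
  simp [List.getElem_finRange]

lemma take_finRange_succ (k : ℕ) (hk : k < p) :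
    (List.finRange p).take (k + 1) = (List.finRange p).take k ++ [(⟨k, hk⟩ : Fin p)] := by
  rw [List.take_succ]
  simp [List.getElem?_eq_getElem, List.getElem_finRange, hk]

lemma prod_split (f : Fin p → Matrix (Fin n) (Fin n) ℝ) (k : ℕ) (hk : k < p) :
    ((List.finRange p).map f).prod =
      (((List.finRange p).take k).map f).prod *
        (f ⟨k, hk⟩ * (((List.finRange p).drop (k + 1)).map f).prod) := by
  conv_lhs => rw [← List.take_append_drop k (List.finRange p), drop_finRange_eq k hk]
  simp [mul_assoc]

lemma vecCons_update (t₀ s : ℝ) (x : Fin p → ℝ) (i : Fin p) :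
    Matrix.vecCons t₀ (Function.update x i s) =
      Function.update (Matrix.vecCons t₀ x) i.succ s :=
  Fin.cons_update (α := fun _ => ℝ) t₀ x i s

variable (B : Matrix (Fin n) (Fin n) ℝ) (t₀ : ℝ)
  (c H : Fin p → Matrix (Fin n) (Fin n) ℝ)

lemma fac_update_of_ne (x : Fin p → ℝ) (i : Fin p) (s : ℝ) (l : Fin p)
    (h1 : l.val ≠ i.val) (h2 : l.val ≠ i.val + 1) :
    fac B t₀ c (Function.update x i s) l = fac B t₀ c x l := by
  unfold fac
  rw [vecCons_update, Function.update_of_ne (Fin.ne_of_val_ne (by simpa using h1)),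
    Function.update_of_ne (Fin.ne_of_val_ne (by simpa using h2))]

lemma fac_update_self (x : Fin p → ℝ) (i : Fin p) (s : ℝ) :
    fac B t₀ c (Function.update x i s) i =
      exp ((s - Matrix.vecCons t₀ x i.castSucc) • B) * c i := by
  unfold fac
  rw [vecCons_update, Function.update_self,
    Function.update_of_ne (Fin.ne_of_val_ne (by simp))]

lemma fac_update_succ (x : Fin p → ℝ) (k : ℕ) (hk : k < p) (hk1 : k + 1 < p) (s : ℝ) :
    fac B t₀ c (Function.update x ⟨k, hk⟩ s) ⟨k + 1, hk1⟩ =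
      exp ((Matrix.vecCons t₀ x (⟨k + 1, hk1⟩ : Fin p).succ - s) • B) * c ⟨k + 1, hk1⟩ := by
  unfold fac
  have hcs : (⟨k + 1, hk1⟩ : Fin p).castSucc = (⟨k, hk⟩ : Fin p).succ := by
    apply Fin.ext; simp
  rw [vecCons_update, hcs, Function.update_self,
    Function.update_of_ne (Fin.ne_of_val_ne (by simp))]

lemma exp_comm (r : ℝ) : exp (r • B) * B = B * exp (r • B) :=
  ((Commute.refl B).smul_left r).exp_left

lemma hasDerivAt_exp_sub_const (a t : ℝ) :
    HasDerivAt (fun s : ℝ => exp ((s - a) • B)) (B * exp ((t - a) • B)) t := by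
  have h1 := hasDerivAt_exp_smul_const' B (t - a)
  have h2 : HasDerivAt (fun s : ℝ => s - a) 1 t := (hasDerivAt_id t).sub_const a
  exact (by simpa using HasDerivAt.scomp t h1 h2 :)

lemma hasDerivAt_exp_const_sub (b t : ℝ) :
    HasDerivAt (fun s : ℝ => exp ((b - s) • B)) (-(B * exp ((b - t) • B))) t := by
  have h1 := hasDerivAt_exp_smul_const' B (b - t)
  have h2 : HasDerivAt (fun s : ℝ => b - s) (-1) t := by
    simpa using (hasDerivAt_id t).const_sub b
  exact (by simpa using HasDerivAt.scomp t h1 h2 :)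

/-- Key derivative computation, middle case `k + 1 < p`. -/
lemma key_mid (x : Fin p → ℝ) (k : ℕ) (hk1 : k + 1 < p) :
    HasDerivAt
      (fun s => ((List.finRange p).map
        (fac B t₀ c (Function.update x ⟨k, Nat.lt_of_succ_lt hk1⟩ s))).prod)
      ((((List.finRange p).take k).map (fac B t₀ c x)).prod *
        ((exp ((Matrix.vecCons t₀ x (⟨k, Nat.lt_of_succ_lt hk1⟩ : Fin p).succ -
            Matrix.vecCons t₀ x (⟨k, Nat.lt_of_succ_lt hk1⟩ : Fin p).castSucc) • B) *
          (B * c ⟨k, Nat.lt_of_succ_lt hk1⟩ - c ⟨k, Nat.lt_of_succ_lt hk1⟩ * B)) *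
         (fac B t₀ c x ⟨k + 1, hk1⟩ *
           (((List.finRange p).drop (k + 2)).map (fac B t₀ c x)).prod)))
      (x ⟨k, Nat.lt_of_succ_lt hk1⟩) := by
  have hk : k < p := Nat.lt_of_succ_lt hk1
  set i : Fin p := ⟨k, hk⟩ with hi
  set j : Fin p := ⟨k + 1, hk1⟩ with hj
  set a : ℝ := Matrix.vecCons t₀ x i.castSucc with ha
  set b : ℝ := Matrix.vecCons t₀ x j.succ with hb
  set T : Matrix (Fin n) (Fin n) ℝ := (((List.finRange p).take k).map (fac B t₀ c x)).prod with hT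
  set R2 : Matrix (Fin n) (Fin n) ℝ :=
    (((List.finRange p).drop (k + 2)).map (fac B t₀ c x)).prod with hR2
  have hfun : (fun s => ((List.finRange p).map (fac B t₀ c (Function.update x i s))).prod) =
      fun s => T * ((exp ((s - a) • B) * c i) * ((exp ((b - s) • B) * c j) * R2)) := by
    funext s
    rw [prod_split _ k hk, drop_finRange_eq (k + 1) hk1, List.map_cons, List.prod_cons]
    have h1 : (((List.finRange p).take k).map (fac B t₀ c (Function.update x i s))).prod = T := by
      refine congrArg List.prod (List.map_congr_left fun l hl => ?_)
      have hlk := val_lt_of_mem_take hl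
      exact fac_update_of_ne B t₀ c x i s l (by simp [hi]; omega) (by simp [hi]; omega)
    have h4 : (((List.finRange p).drop (k + 2)).map (fac B t₀ c (Function.update x i s))).prod
        = R2 := by
      refine congrArg List.prod (List.map_congr_left fun l hl => ?_)
      have hlk := le_val_of_mem_drop hl
      exact fac_update_of_ne B t₀ c x i s l (by simp [hi]; omega) (by simp [hi]; omega)
    rw [h1, h4, fac_update_self B t₀ c x i s, fac_update_succ B t₀ c x k hk hk1 s]
  rw [hfun]
  have hE1 : HasDerivAt (fun s : ℝ => exp ((s - a) • B))
      (B * exp ((x i - a) • B)) (x i) := hasDerivAt_exp_sub_const B a (x i)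
  have hE2 : HasDerivAt (fun s : ℝ => exp ((b - s) • B))
      (-(B * exp ((b - x i) • B))) (x i) := hasDerivAt_exp_const_sub B b (x i)
  have h := ((hE1.mul_const (c i)).mul ((hE2.mul_const (c j)).mul_const R2)).const_mul T
  refine h.congr_deriv (Eq.symm ?_)
  have hsucc : Matrix.vecCons t₀ x i.succ = x i := by simp
  have hcs : j.castSucc = i.succ := by apply Fin.ext; simp [hi, hj]
  have hfj : fac B t₀ c x j = exp ((b - x i) • B) * c j := by
    unfold fac
    rw [hcs, hsucc, ← hb]
  rw [hfj, hsucc]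
  rw [← exp_comm B (x i - a)]
  noncomm_ring

/-- Key derivative computation, last case `k + 1 = p`. -/
lemma key_last (x : Fin p → ℝ) (k : ℕ) (hk : k < p) (hk1 : k + 1 = p) :
    HasDerivAt
      (fun s => ((List.finRange p).map (fac B t₀ c (Function.update x ⟨k, hk⟩ s))).prod)
      ((((List.finRange p).take k).map (fac B t₀ c x)).prod *
        (exp ((Matrix.vecCons t₀ x (⟨k, hk⟩ : Fin p).succ -
            Matrix.vecCons t₀ x (⟨k, hk⟩ : Fin p).castSucc) • B) *
          (B * c ⟨k, hk⟩)))
      (x ⟨k, hk⟩) := by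
  set i : Fin p := ⟨k, hk⟩ with hi
  set a : ℝ := Matrix.vecCons t₀ x i.castSucc with ha
  set T : Matrix (Fin n) (Fin n) ℝ := (((List.finRange p).take k).map (fac B t₀ c x)).prod with hT
  have hfun : (fun s => ((List.finRange p).map (fac B t₀ c (Function.update x i s))).prod) =
      fun s => T * (exp ((s - a) • B) * c i) := by
    funext s
    rw [prod_split _ k hk, List.drop_eq_nil_of_le (by simp [hk1])]
    have h1 : (((List.finRange p).take k).map (fac B t₀ c (Function.update x i s))).prod = T := by
      refine congrArg List.prod (List.map_congr_left fun l hl => ?_)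
      have hlk := val_lt_of_mem_take hl
      exact fac_update_of_ne B t₀ c x i s l (by simp [hi]; omega) (by simp [hi]; omega)
    rw [h1, fac_update_self B t₀ c x i s]
    simp only [List.map_nil, List.prod_nil, mul_one]
    rfl
  rw [hfun]
  have hE1 : HasDerivAt (fun s : ℝ => exp ((s - a) • B))
      (B * exp ((x i - a) • B)) (x i) := hasDerivAt_exp_sub_const B a (x i)
  have h := (hE1.mul_const (c i)).const_mul T
  refine h.congr_deriv (Eq.symm ?_)
  have hsucc : Matrix.vecCons t₀ x i.succ = x i := by simp
  rw [hsucc, ← exp_comm B (x i - a)]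
  noncomm_ring

/-- Differentiating `Pk k` in the `k`-th variable gives `Pk (k+1)`, when `k + 1 < p`. -/
lemma deriv_Pk_mid (x : Fin p → ℝ) (k : ℕ) (hk1 : k + 1 < p) :
    HasDerivAt
      (fun s => Pk B t₀ H k (Function.update x ⟨k, Nat.lt_of_succ_lt hk1⟩ s))
      (Pk B t₀ H (k + 1) x) (x ⟨k, Nat.lt_of_succ_lt hk1⟩) := by
  have hk : k < p := Nat.lt_of_succ_lt hk1
  have h := key_mid B t₀ (Dc B H k) x k hk1
  refine h.congr_deriv (Eq.symm ?_)
  unfold Pk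
  rw [prod_split _ k hk, drop_finRange_eq (k + 1) hk1, List.map_cons, List.prod_cons]
  have h1 : (((List.finRange p).take k).map (fac B t₀ (Dc B H (k + 1)) x)).prod =
      (((List.finRange p).take k).map (fac B t₀ (Dc B H k) x)).prod := by
    refine congrArg List.prod (List.map_congr_left fun l hl => ?_)
    have hlk := val_lt_of_mem_take hl
    unfold fac Dc
    rw [if_pos hlk, if_pos (Nat.lt_succ_of_lt hlk)]
  have h2 : fac B t₀ (Dc B H (k + 1)) x ⟨k, hk⟩ =
      exp ((Matrix.vecCons t₀ x (⟨k, hk⟩ : Fin p).succ -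
        Matrix.vecCons t₀ x (⟨k, hk⟩ : Fin p).castSucc) • B) *
        (B * Dc B H k ⟨k, hk⟩ - Dc B H k ⟨k, hk⟩ * B) := by
    unfold fac Dc
    rw [if_pos (Nat.lt_succ_self k), if_neg (lt_irrefl k)]
  have h3 : fac B t₀ (Dc B H (k + 1)) x ⟨k + 1, hk1⟩ = fac B t₀ (Dc B H k) x ⟨k + 1, hk1⟩ := by
    unfold fac Dc
    rw [if_neg (lt_irrefl (k + 1)), if_neg (show ¬ k + 1 < k by omega)]
  have h4 : (((List.finRange p).drop (k + 2)).map (fac B t₀ (Dc B H (k + 1)) x)).prod =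
      (((List.finRange p).drop (k + 2)).map (fac B t₀ (Dc B H k) x)).prod := by
    refine congrArg List.prod (List.map_congr_left fun l hl => ?_)
    have hlk := le_val_of_mem_drop hl
    unfold fac Dc
    rw [if_neg (by omega), if_neg (by omega)]
  rw [h1, h2, h3, h4]

/-- Differentiating `Pk (p-1)` in the last variable gives the final formula. -/
lemma deriv_Pk_last (hp : 1 ≤ p) (x : Fin p → ℝ) :
    HasDerivAt
      (fun s => Pk B t₀ H (p - 1) (Function.update x ⟨p - 1, Nat.sub_lt hp Nat.one_pos⟩ s))
      ((((List.finRange p).take (p - 1)).map (fun l =>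
          exp ((Matrix.vecCons t₀ x l.succ - Matrix.vecCons t₀ x l.castSucc) • B) *
            (B * H l - H l * B))).prod *
        exp ((Matrix.vecCons t₀ x (⟨p - 1, Nat.sub_lt hp Nat.one_pos⟩ : Fin p).succ -
          Matrix.vecCons t₀ x (⟨p - 1, Nat.sub_lt hp Nat.one_pos⟩ : Fin p).castSucc) • B) *
        B * H ⟨p - 1, Nat.sub_lt hp Nat.one_pos⟩)
      (x ⟨p - 1, Nat.sub_lt hp Nat.one_pos⟩) := by
  have hk : p - 1 < p := Nat.sub_lt hp Nat.one_pos
  have hk1 : (p - 1) + 1 = p := Nat.succ_pred_eq_of_pos hp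
  have h := key_last B t₀ (Dc B H (p - 1)) x (p - 1) hk hk1
  refine h.congr_deriv (Eq.symm ?_)
  have h1 : (((List.finRange p).take (p - 1)).map (fun l =>
      exp ((Matrix.vecCons t₀ x l.succ - Matrix.vecCons t₀ x l.castSucc) • B) *
        (B * H l - H l * B))).prod =
      (((List.finRange p).take (p - 1)).map (fac B t₀ (Dc B H (p - 1)) x)).prod := by
    refine congrArg List.prod (List.map_congr_left fun l hl => ?_)
    have hlk := val_lt_of_mem_take hl
    unfold fac Dc
    rw [if_pos hlk]
  have h2 : Dc B H (p - 1) ⟨p - 1, hk⟩ = H ⟨p - 1, hk⟩ := by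
    unfold Dc; rw [if_neg (lt_irrefl (p - 1))]
  rw [h1, h2, mul_assoc, mul_assoc]

end Thm317

open Thm317 in
/-- The key differentiation identity of Theorem 3.17: the iterated mixed partial derivative,
taken successively in `t₁, …, t_p`, of the ordered product
`G(t₁,…,t_p) = ∏_{l=1}^p exp((t_l − t_{l−1})B) H_l` exists and equals
`(∏_{l=1}^{p−1} exp((t_l − t_{l−1})B) [B,H_l]) exp((t_p − t_{p−1})B) B H_p`. -/
theorem iterated_mixed_partial_ordered_product {n p : ℕ} (hp : 1 ≤ p)
    (B : Matrix (Fin n) (Fin n) ℝ) (H : Fin p → Matrix (Fin n) (Fin n) ℝ) (t₀ : ℝ)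
    (G : (Fin p → ℝ) → Matrix (Fin n) (Fin n) ℝ)
    (hG : ∀ t : Fin p → ℝ, G t =
      ((List.finRange p).map (fun l =>
        exp ((Matrix.vecCons t₀ t l.succ - Matrix.vecCons t₀ t l.castSucc) • B) * H l)).prod) :
    (∀ (q : ℕ) (hq : q < p) (x : Fin p → ℝ),
      DifferentiableAt ℝ
        (fun s => (((List.finRange p).take q).foldl (fun F i => pder i F) G)
          (Function.update x ⟨q, hq⟩ s)) (x ⟨q, hq⟩)) ∧
    (∀ t : Fin p → ℝ,
      ((List.finRange p).foldl (fun F i => pder i F) G) t =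
        (((List.finRange p).take (p - 1)).map (fun l =>
          exp ((Matrix.vecCons t₀ t l.succ - Matrix.vecCons t₀ t l.castSucc) • B) *
            (B * H l - H l * B))).prod *
          exp ((Matrix.vecCons t₀ t (⟨p - 1, Nat.sub_lt hp Nat.one_pos⟩ : Fin p).succ -
            Matrix.vecCons t₀ t (⟨p - 1, Nat.sub_lt hp Nat.one_pos⟩ : Fin p).castSucc) • B) *
          B * H ⟨p - 1, Nat.sub_lt hp Nat.one_pos⟩) := by
  -- the partial folds agree with `Pk`
  have foldl_take : ∀ (k : ℕ), k < p → ∀ t : Fin p → ℝ,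
      (((List.finRange p).take k).foldl (fun F i => pder i F) G) t = Pk B t₀ H k t := by
    intro k
    induction k with
    | zero =>
      intro _ t
      simp only [List.take_zero, List.foldl_nil]
      rw [hG]
      unfold Pk
      refine congrArg List.prod (List.map_congr_left fun l _ => ?_)
      unfold fac Dc
      rw [if_neg (by omega)]
    | succ k ih =>
      intro hk t
      have hkp : k < p := Nat.lt_of_succ_lt hk
      rw [take_finRange_succ k hkp, List.foldl_append, List.foldl_cons, List.foldl_nil]
      have hFeq : (((List.finRange p).take k).foldl (fun F i => pder i F) G) = Pk B t₀ H k :=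
        funext (ih hkp)
      rw [hFeq]
      exact (deriv_Pk_mid B t₀ H t k hk).deriv
  constructor
  · intro q hq x
    have hfe : (fun s => (((List.finRange p).take q).foldl (fun F i => pder i F) G)
        (Function.update x ⟨q, hq⟩ s)) =
        fun s => Pk B t₀ H q (Function.update x ⟨q, hq⟩ s) :=
      funext fun s => foldl_take q hq _
    rw [hfe]
    rcases Nat.lt_or_ge (q + 1) p with h | h
    · exact (deriv_Pk_mid B t₀ H x q h).differentiableAt
    · have hq1 : q + 1 = p := by omega
      exact ((key_last B t₀ (Dc B H q) x q hq hq1).differentiableAt)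
  · intro t
    have hk : p - 1 < p := Nat.sub_lt hp Nat.one_pos
    have h1 : (List.finRange p).take ((p - 1) + 1) =
        (List.finRange p).take (p - 1) ++ [(⟨p - 1, hk⟩ : Fin p)] := take_finRange_succ _ hk
    rw [Nat.sub_add_cancel hp, List.take_of_length_le (le_of_eq (List.length_finRange (n := p)))] at h1
    conv_lhs => rw [h1]
    rw [List.foldl_append, List.foldl_cons, List.foldl_nil]
    have hFeq : (((List.finRange p).take (p - 1)).foldl (fun F i => pder i F) G) =
        Pk B t₀ H (p - 1) := funext (foldl_take (p - 1) hk)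
    rw [hFeq]
    exact (deriv_Pk_last B t₀ H hp t).deriv
end
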